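/- Conditional variance of the Ehrenfest process (Theorem 3.3(b)): for every i ∈ {0,1,…,N} and every t ≥ 0, Σ_{j=0}^{N} j² · p_{ij}(t) − (Σ_{j=0}^{N} j · p_{ij}(t))² = N·p·q + (2p−1)·(N·p − i)·e^{−λ(α+β)t} − [(N−i)·p² + i·q²]·e^{−2λ(α+β)t}. -/

import Mathlib

/-!
Every particle of the Ehrenfest urn moves independently, so the generating function of the
transition probabilities factors:
`∑ⱼ p_{ij}(t) zʲ = (a z + 1 - a)^i (b z + 1 - b)^(N - i)` with `e = exp(-λ(α+β)t)`,
`a = p + q e`, `b = p (1 - e)`. The distribution of `j` is that of a sum of `i` Bernoulli(a) and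
`N - i` Bernoulli(b) independent variables, whose variance is `i a (1 - a) + (N - i) b (1 - b)`.

The factorisation comes out of the spectral formula by applying twice the generating function
`∑ⱼ C(N,j) K_j(x) sʲ r^(N-j) = (r + s - s/p)^x (r + s)^(N-x)` of the Krawtchouk polynomials, once in
the degree and once, by the symmetry `K_l(x) = K_x(l)`, in the argument. The variance is read off
from the factorial moments `∑ⱼ C(j,m) p_{ij}(t)`, which are the Taylor coefficients at `z = 1`.
-/

open Finset

/-- The Krawtchouk polynomial `K_l(x; N; p)`, defined via the hypergeometric sum. -/
noncomputable def krawtchouk (N : ℕ) (p : ℝ) (l x : ℕ) : ℝ :=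
  ∑ k ∈ Finset.range (N + 1),
    ((ascPochhammer ℝ k).eval (-(l : ℝ)) * (ascPochhammer ℝ k).eval (-(x : ℝ))) /
      ((ascPochhammer ℝ k).eval (-(N : ℝ)) * (Nat.factorial k : ℝ)) * (1 / p) ^ k

/-- Transition probabilities `p_{ij}(t)` of the continuous-time Ehrenfest process,
where `p = α/(α+β)` and `q = 1 - p`. -/
noncomputable def ehrenfestP (N : ℕ) (p q lam α β : ℝ) (i j : ℕ) (t : ℝ) : ℝ :=
  (N.choose j : ℝ) * (p / q) ^ j *
    ∑ x ∈ Finset.range (N + 1),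
      (N.choose x : ℝ) * p ^ x * q ^ (N - x) * krawtchouk N p i x * krawtchouk N p j x *
        Real.exp (-(lam * (α + β) * (x : ℝ) * t))

open Polynomial

theorem coeff_C_mul_X_add_C_pow {R : Type*} [CommSemiring R] (a b : R) (n m : ℕ) :
    ((C a * X + C b) ^ n).coeff m = n.choose m * a ^ m * b ^ (n - m) := by
  have hterm : ∀ j, (C a * X) ^ j * C b ^ (n - j) * (n.choose j : R[X]) =
      C (n.choose j * a ^ j * b ^ (n - j)) * X ^ j := by
    intro j; simp only [mul_pow, ← C_pow, ← C_eq_natCast, C_mul]; ring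
  simp only [add_pow, hterm, finsetSum_coeff, coeff_C_mul_X_pow]
  rw [sum_ite_eq]
  split_ifs with hm
  · rfl
  · rw [Nat.choose_eq_zero_of_lt (by simpa using hm)]; simp

theorem taylor_coeff_sum_C_mul_X_pow {R : Type*} [CommSemiring R] (r : R) (s : Finset ℕ)
    (c : ℕ → R) (m : ℕ) :
    (taylor r (∑ j ∈ s, C (c j) * X ^ j)).coeff m =
      ∑ j ∈ s, c j * (r ^ (j - m) * j.choose m) := by
  simp [coeff_X_add_C_pow]

theorem taylor_C_mul_X_add_C {R : Type*} [CommSemiring R] (r a b : R) :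
    taylor r (C a * X + C b) = C a * X + C (a * r + b) := by
  simp only [map_add, taylor_C, taylor_mul, taylor_X, C_mul]; ring

theorem sum_choose_mul_pow_mul_choose {R : Type*} [CommSemiring R] (N k : ℕ) (s r : R) :
    ∑ j ∈ range (N + 1), N.choose j * s ^ j * r ^ (N - j) * j.choose k =
      N.choose k * s ^ k * (s + r) ^ (N - k) := by
  have hpoly : (C s * X + C r) ^ N =
      ∑ j ∈ range (N + 1), C (N.choose j * s ^ j * r ^ (N - j)) * X ^ j := by
    rw [add_pow]
    refine sum_congr rfl fun j _ => ?_
    simp only [mul_pow, ← C_pow, ← C_eq_natCast, C_mul]; ring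
  have htaylor :=
    taylor_coeff_sum_C_mul_X_pow 1 (range (N + 1)) (fun j => N.choose j * s ^ j * r ^ (N - j)) k
  rw [← hpoly, taylor_pow, taylor_C_mul_X_add_C, coeff_C_mul_X_add_C_pow] at htaylor
  simpa using htaylor.symm

theorem sum_mul_choose_eq_taylor_coeff {R : Type*} [CommRing R] [IsDomain R] [Infinite R]
    {s : Finset ℕ} {c : ℕ → R} {f : R[X]} (h : ∀ z, ∑ j ∈ s, c j * z ^ j = f.eval z) (m : ℕ) :
    ∑ j ∈ s, c j * j.choose m = (taylor 1 f).coeff m := by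
  have hf : ∑ j ∈ s, C (c j) * X ^ j = f :=
    Polynomial.funext fun z => by simp [eval_finsetSum, h]
  rw [← hf, taylor_coeff_sum_C_mul_X_pow]
  simp

theorem sum_sq_mul_sub_sq_of_sum_mul_pow_eq {s : Finset ℕ} {c : ℕ → ℝ} {i k : ℕ}
    {a₀ a₁ b₀ b₁ : ℝ}
    (h : ∀ z, ∑ j ∈ s, c j * z ^ j = (a₁ * z + a₀) ^ i * (b₁ * z + b₀) ^ k)
    (ha : a₁ + a₀ = 1) (hb : b₁ + b₀ = 1) :
    ∑ j ∈ s, (j : ℝ) ^ 2 * c j - (∑ j ∈ s, (j : ℝ) * c j) ^ 2 =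
      i * a₁ * a₀ + k * b₁ * b₀ := by
  have hmom := sum_mul_choose_eq_taylor_coeff
    (f := (C a₁ * X + C a₀) ^ i * (C b₁ * X + C b₀) ^ k) (by simpa using h)
  simp only [taylor_mul, taylor_pow, taylor_C_mul_X_add_C, mul_one, ha, hb, coeff_mul,
    Finset.Nat.sum_antidiagonal_eq_sum_range_succ_mk, coeff_C_mul_X_add_C_pow, one_pow] at hmom
  have hmean : ∑ j ∈ s, (j : ℝ) * c j = i * a₁ + k * b₁ := by
    have h1 := hmom 1
    simp only [sum_range_succ, sum_range_zero, Nat.choose_one_right, mul_comm (c _)] at h1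
    rw [h1]; norm_num; ring
  have hsplit : ∑ j ∈ s, (j : ℝ) ^ 2 * c j =
      2 * ∑ j ∈ s, c j * (j.choose 2 : ℕ) + ∑ j ∈ s, (j : ℝ) * c j := by
    rw [mul_sum, ← sum_add_distrib]
    refine sum_congr rfl fun j _ => ?_
    rw [Nat.cast_choose_two]
    ring
  rw [hsplit, hmean, hmom 2]
  norm_num [sum_range_succ, Nat.cast_choose_two]
  linear_combination (-(i : ℝ) * a₁) * ha - (k * b₁) * hb

theorem ascPochhammer_eval_neg_natCast {R : Type*} [CommRing R] (m k : ℕ) :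
    (ascPochhammer R k).eval (-(m : R)) = (-1) ^ k * k.factorial * m.choose k := by
  rw [ascPochhammer_eval_neg_eq_descPochhammer, descPochhammer_eval_eq_descFactorial,
    Nat.descFactorial_eq_factorial_mul_choose]
  push_cast
  ring

theorem krawtchouk_eq_sum_choose (N : ℕ) (p : ℝ) (l x : ℕ) :
    krawtchouk N p l x =
      ∑ k ∈ range (N + 1), l.choose k * x.choose k / N.choose k * (-p⁻¹) ^ k := by
  refine sum_congr rfl fun k hk => ?_
  have hN : (N.choose k : ℝ) ≠ 0 := by
    exact_mod_cast (Nat.choose_pos (Nat.lt_succ_iff.mp (mem_range.mp hk))).ne'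
  simp only [ascPochhammer_eval_neg_natCast, neg_pow p⁻¹, one_div, inv_pow]
  field_simp

theorem krawtchouk_comm (N : ℕ) (p : ℝ) (l x : ℕ) :
    krawtchouk N p l x = krawtchouk N p x l := by
  simp only [krawtchouk_eq_sum_choose, mul_comm (l.choose _ : ℝ)]

theorem sum_choose_mul_krawtchouk_mul_pow (N : ℕ) (p : ℝ) {x : ℕ} (hx : x ≤ N) (s r : ℝ) :
    ∑ j ∈ range (N + 1), N.choose j * krawtchouk N p j x * s ^ j * r ^ (N - j) =
      (r + s - s / p) ^ x * (r + s) ^ (N - x) := by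
  calc ∑ j ∈ range (N + 1), N.choose j * krawtchouk N p j x * s ^ j * r ^ (N - j)
      = ∑ k ∈ range (N + 1), x.choose k / N.choose k * (-p⁻¹) ^ k *
          ∑ j ∈ range (N + 1), N.choose j * s ^ j * r ^ (N - j) * j.choose k := by
        simp only [krawtchouk_eq_sum_choose, mul_sum, sum_mul]
        rw [sum_comm]
        refine sum_congr rfl fun k _ => sum_congr rfl fun j _ => ?_
        ring
    _ = ∑ k ∈ range (N + 1), x.choose k * (-(s / p)) ^ k * (r + s) ^ (N - k) := by
        refine sum_congr rfl fun k hk => ?_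
        have hN : (N.choose k : ℝ) ≠ 0 := by
          exact_mod_cast (Nat.choose_pos (Nat.lt_succ_iff.mp (mem_range.mp hk))).ne'
        rw [sum_choose_mul_pow_mul_choose]
        field_simp
        ring
    _ = ∑ k ∈ range (x + 1), x.choose k * (-(s / p)) ^ k * (r + s) ^ (N - k) := by
        refine (sum_subset (range_subset_range.mpr (by omega)) fun k _ hk => ?_).symm
        rw [Nat.choose_eq_zero_of_lt (by simpa using hk)]
        simp
    _ = (r + s) ^ (N - x) * (-(s / p) + (r + s)) ^ x := by
        rw [add_pow _ _ x, mul_sum]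
        refine sum_congr rfl fun k hk => ?_
        have hk : k ≤ x := Nat.lt_succ_iff.mp (mem_range.mp hk)
        rw [show N - k = (x - k) + (N - x) by omega, pow_add]
        ring
    _ = (r + s - s / p) ^ x * (r + s) ^ (N - x) := by ring

theorem sum_ehrenfestP_mul_pow (N : ℕ) {p q : ℝ} (hp : p ≠ 0) (hq : q ≠ 0) (hpq : p + q = 1)
    (lam α β : ℝ) {i : ℕ} (hi : i ≤ N) (t z : ℝ) :
    ∑ j ∈ range (N + 1), ehrenfestP N p q lam α β i j t * z ^ j =
      ((p + q * Real.exp (-(lam * (α + β) * t))) * z +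
          q * (1 - Real.exp (-(lam * (α + β) * t)))) ^ i *
        (p * (1 - Real.exp (-(lam * (α + β) * t))) * z +
          (q + p * Real.exp (-(lam * (α + β) * t)))) ^ (N - i) := by
  set e := Real.exp (-(lam * (α + β) * t))
  have hexp (x : ℕ) : Real.exp (-(lam * (α + β) * x * t)) = e ^ x := by
    rw [← Real.exp_nat_mul]; ring_nf
  have hinner {x : ℕ} (hx : x ≤ N) :
      ∑ j ∈ range (N + 1), N.choose j * krawtchouk N p j x * (p * z / q) ^ j * 1 ^ (N - j) =
        (1 - z) ^ x * ((q + p * z) / q) ^ (N - x) := by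
    rw [sum_choose_mul_krawtchouk_mul_pow N p hx]
    congr 2
    · field_simp; linear_combination z * hpq
    · field_simp
  calc ∑ j ∈ range (N + 1), ehrenfestP N p q lam α β i j t * z ^ j
      = ∑ x ∈ range (N + 1), N.choose x * p ^ x * q ^ (N - x) * krawtchouk N p i x * e ^ x *
          ∑ j ∈ range (N + 1),
            N.choose j * krawtchouk N p j x * (p * z / q) ^ j * 1 ^ (N - j) := by
        simp only [ehrenfestP, hexp, mul_sum, sum_mul]
        rw [sum_comm]
        refine sum_congr rfl fun x _ => sum_congr rfl fun j _ => ?_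
        ring
    _ = ∑ x ∈ range (N + 1), N.choose x * krawtchouk N p x i * (p * e * (1 - z)) ^ x *
          (q + p * z) ^ (N - x) := by
        refine sum_congr rfl fun x hx => ?_
        have hxN : x ≤ N := Nat.lt_succ_iff.mp (mem_range.mp hx)
        rw [hinner hxN, krawtchouk_comm, div_pow, mul_pow, mul_pow]
        field_simp
    _ = _ := by
        rw [sum_choose_mul_krawtchouk_mul_pow N p hi]
        congr 2
        · field_simp; linear_combination (e - e * z) * hpq
        · ring

theorem ehrenfest_conditional_variance_general (N : ℕ) (lam α β : ℝ)
    (hα : α ∈ Set.Ioc (0 : ℝ) 1) (hβ : β ∈ Set.Ioc (0 : ℝ) 1)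
    (p q : ℝ) (hp : p = α / (α + β)) (hq : q = 1 - p)
    (i : ℕ) (hi : i ≤ N) (t : ℝ) :
    ∑ j ∈ Finset.range (N + 1), (j : ℝ) ^ 2 * ehrenfestP N p q lam α β i j t -
        (∑ j ∈ Finset.range (N + 1), (j : ℝ) * ehrenfestP N p q lam α β i j t) ^ 2 =
      (N : ℝ) * p * q +
        (2 * p - 1) * ((N : ℝ) * p - (i : ℝ)) * Real.exp (-(lam * (α + β) * t)) -
        (((N : ℝ) - (i : ℝ)) * p ^ 2 + (i : ℝ) * q ^ 2) *
          Real.exp (-(2 * lam * (α + β) * t)) := by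
  have hαβ : 0 < α + β := add_pos hα.1 hβ.1
  have hp0 : p ≠ 0 := by rw [hp]; exact (div_pos hα.1 hαβ).ne'
  have hq0 : q ≠ 0 := by
    rw [hq, hp, one_sub_div hαβ.ne', add_sub_cancel_left]; exact (div_pos hβ.1 hαβ).ne'
  have hpq : p + q = 1 := by rw [hq]; ring
  have hexp : Real.exp (-(2 * lam * (α + β) * t)) = Real.exp (-(lam * (α + β) * t)) ^ 2 := by
    rw [← Real.exp_nat_mul]; ring_nf
  rw [sum_sq_mul_sub_sq_of_sum_mul_pow_eq (sum_ehrenfestP_mul_pow N hp0 hq0 hpq lam α β hi t)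
    (by linear_combination hpq) (by linear_combination hpq), hexp, Nat.cast_sub hi]
  subst hq
  ring

/-- Conditional variance of the Ehrenfest process. -/
theorem ehrenfest_conditional_variance (N : ℕ) (lam α β : ℝ) (hlam : 0 < lam)
    (hα : α ∈ Set.Ioc (0 : ℝ) 1) (hβ : β ∈ Set.Ioc (0 : ℝ) 1)
    (p q : ℝ) (hp : p = α / (α + β)) (hq : q = 1 - p)
    (i : ℕ) (hi : i ≤ N) (t : ℝ) (ht : 0 ≤ t) :
    ∑ j ∈ Finset.range (N + 1), (j : ℝ) ^ 2 * ehrenfestP N p q lam α β i j t -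
        (∑ j ∈ Finset.range (N + 1), (j : ℝ) * ehrenfestP N p q lam α β i j t) ^ 2 =
      (N : ℝ) * p * q +
        (2 * p - 1) * ((N : ℝ) * p - (i : ℝ)) * Real.exp (-(lam * (α + β) * t)) -
        (((N : ℝ) - (i : ℝ)) * p ^ 2 + (i : ℝ) * q ^ 2) *
          Real.exp (-(2 * lam * (α + β) * t)) :=
  ehrenfest_conditional_variance_general N lam α β hα hβ p q hp hq i hi t
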